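/- Let β = (i_1,…,i_m) be a word in the simple transpositions of S_n and let u ∈ S_n satisfy u ≤ s_{i_1} * s_{i_2} * ⋯ * s_{i_m} in the Bruhat order, where * is the Demazure product. Define u_{(m)} := u and, for c = m, m−1, …, 1, u_{(c−1)} := u_{(c)} s_{i_c} if u_{(c)} s_{i_c} < u_{(c)}, and u_{(c−1)} := u_{(c)} otherwise. Then u_{(0)} = id, and the number of indices c ∈ {1,…,m} with u_{(c)} = u_{(c−1)} equals m − ℓ(u); moreover, the subword of β on the remaining indices (those with u_{(c)} ≠ u_{(c−1)}) is a reduced word for u. -/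

import Mathlib

open Matrix Pointwise
open scoped Classical

noncomputable section

/-- `phi n i A` places the 2×2 matrix `A` into rows and columns `i, i+1`
(0-based) of the identity matrix. -/
def phi (n i : ℕ) (A : Matrix (Fin 2) (Fin 2) ℂ) : Matrix (Fin n) (Fin n) ℂ :=
  Matrix.of fun a b =>
    if (a : ℕ) = i ∧ (b : ℕ) = i then A 0 0
    else if (a : ℕ) = i ∧ (b : ℕ) = i + 1 then A 0 1
    else if (a : ℕ) = i + 1 ∧ (b : ℕ) = i then A 1 0
    else if (a : ℕ) = i + 1 ∧ (b : ℕ) = i + 1 then A 1 1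
    else if a = b then 1 else 0

def sdot (n i : ℕ) : Matrix (Fin n) (Fin n) ℂ := phi n i !![0, -1; 1, 0]
def xmat (n i : ℕ) (t : ℂ) : Matrix (Fin n) (Fin n) ℂ := phi n i !![1, t; 0, 1]
def ymat (n i : ℕ) (t : ℂ) : Matrix (Fin n) (Fin n) ℂ := phi n i !![1, 0; t, 1]
def zmat (n i : ℕ) (t : ℂ) : Matrix (Fin n) (Fin n) ℂ := phi n i !![t, -1; 1, 0]
def zbar (n i : ℕ) (t : ℂ) : Matrix (Fin n) (Fin n) ℂ := phi n i !![t, 1; -1, 0]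
def alphamat (n i : ℕ) (t : ℂ) : Matrix (Fin n) (Fin n) ℂ := phi n i !![t, 0; 0, 1/t]

/-- The simple transposition swapping `i` and `i+1` (0-based). -/
def sperm (n i : ℕ) : Equiv.Perm (Fin n) :=
  if h : i + 1 < n then Equiv.swap ⟨i, Nat.lt_of_succ_lt h⟩ ⟨i + 1, h⟩ else 1

def wordPerm (n : ℕ) (l : List ℕ) : Equiv.Perm (Fin n) := (l.map (sperm n)).prod

def wordMat (n : ℕ) (l : List ℕ) : Matrix (Fin n) (Fin n) ℂ := (l.map (sdot n)).prod

def IsWordFor (n : ℕ) (l : List ℕ) (w : Equiv.Perm (Fin n)) : Prop :=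
  (∀ i ∈ l, i + 1 < n) ∧ wordPerm n l = w

/-- Coxeter length on `S_n`. -/
def plen (n : ℕ) (w : Equiv.Perm (Fin n)) : ℕ :=
  sInf {k | ∃ l : List ℕ, IsWordFor n l w ∧ l.length = k}

def IsReducedWord (n : ℕ) (l : List ℕ) (w : Equiv.Perm (Fin n)) : Prop :=
  IsWordFor n l w ∧ l.length = plen n w

/-- The minor of `M` with row set `A` and column set `B` (of equal sizes). -/
def minorD {n : ℕ} (M : Matrix (Fin n) (Fin n) ℂ) (A B : Finset (Fin n)) : ℂ :=
  if h : A.card = B.card then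
    (M.submatrix (fun k => A.orderEmbOfFin rfl k) (fun k => B.orderEmbOfFin h.symm k)).det
  else 0

/-- `pset n w k = {w(1),…,w(k)}` (1-indexed), i.e. the image under `w`
of the first `k` elements of `Fin n`. -/
def pset (n : ℕ) (w : Equiv.Perm (Fin n)) (k : ℕ) : Finset (Fin n) :=
  (Finset.univ.filter fun j : Fin n => (j : ℕ) < k).image w

/-- Upper unitriangular matrices. -/
def Uplus (n : ℕ) : Set (Matrix (Fin n) (Fin n) ℂ) :=
  {g | (∀ i, g i i = 1) ∧ ∀ i j : Fin n, j < i → g i j = 0}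

/-- The double coset `U₊ M U₊`. -/
def DCoset (n : ℕ) (M : Matrix (Fin n) (Fin n) ℂ) : Set (Matrix (Fin n) (Fin n) ℂ) :=
  {x | ∃ a ∈ Uplus n, ∃ c ∈ Uplus n, x = a * M * c}

/-- The Borel subgroup of upper triangular matrices in SL_n. -/
def Bplus (n : ℕ) : Set (Matrix (Fin n) (Fin n) ℂ) :=
  {g | g.det = 1 ∧ ∀ i j : Fin n, j < i → g i j = 0}

/-- The Bruhat cell `B₊ M B₊`. -/
def BruhatCell (n : ℕ) (M : Matrix (Fin n) (Fin n) ℂ) : Set (Matrix (Fin n) (Fin n) ℂ) :=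
  {x | ∃ a ∈ Bplus n, ∃ c ∈ Bplus n, x = a * M * c}

/-- The Demazure product of a word in simple transpositions. -/
def DemProd (n : ℕ) (l : List ℕ) : Equiv.Perm (Fin n) :=
  l.foldl (fun w i => if plen n w < plen n (w * sperm n i) then w * sperm n i else w) 1

/-- Bruhat order on `S_n`, via the subword characterization: `u ≤ w` iff some
reduced word for `w` contains a subword whose product is `u`. -/
def BruhatLE (n : ℕ) (u w : Equiv.Perm (Fin n)) : Prop :=
  ∃ lw : List ℕ, IsReducedWord n lw w ∧ ∃ l' : List ℕ, l'.Sublist lw ∧ wordPerm n l' = u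

/-!
Lengths are inversion numbers, and `u ≤ w` in the subword Bruhat order implies that the rank
counts `#{a < k | j ≤ u a}` are dominated by those of `w`. Right multiplication by `s_i`
changes only the rank counts at `k = i + 1`, which yields the lifting property: if `u` is
dominated by `w s_i` with `w < w s_i`, then `u` (if `u < u s_i`) or `u s_i` (otherwise) is
dominated by `w`. Walking down the word from the Demazure product, this keeps `u_(c)`
dominated by the Demazure product of `i_1, …, i_c`, so `u_(0)` is dominated by the identity and
hence equals it. Read upwards, each step `u_(c-1) → u_(c)` is either trivial or a
length-increasing multiplication by `s_{i_c}`, so the non-trivial letters spell a reduced word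
for `u`.
-/

open Equiv Finset

variable {n : ℕ}

theorem sperm_of_lt {i : ℕ} (h : i + 1 < n) :
    sperm n i = swap ⟨i, Nat.lt_of_succ_lt h⟩ ⟨i + 1, h⟩ := dif_pos h

theorem sperm_of_not_lt {i : ℕ} (h : ¬i + 1 < n) : sperm n i = 1 := dif_neg h

@[simp]
theorem sperm_mul_self (i : ℕ) : sperm n i * sperm n i = 1 := by
  unfold sperm; split_ifs <;> simp

@[simp]
theorem sperm_apply_sperm (i : ℕ) (a : Fin n) : sperm n i (sperm n i a) = a := by
  rw [← Perm.mul_apply, sperm_mul_self, Perm.one_apply]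

theorem mul_sperm_apply_fst {i : ℕ} (h : i + 1 < n) (w : Perm (Fin n)) :
    (w * sperm n i) ⟨i, Nat.lt_of_succ_lt h⟩ = w ⟨i + 1, h⟩ := by
  rw [Perm.mul_apply, sperm_of_lt h, swap_apply_left]

theorem mul_sperm_apply_snd {i : ℕ} (h : i + 1 < n) (w : Perm (Fin n)) :
    (w * sperm n i) ⟨i + 1, h⟩ = w ⟨i, Nat.lt_of_succ_lt h⟩ := by
  rw [Perm.mul_apply, sperm_of_lt h, swap_apply_right]

theorem sperm_apply_val {i : ℕ} (h : i + 1 < n) (a : Fin n) :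
    (sperm n i a : ℕ) = if (a : ℕ) = i then i + 1 else if (a : ℕ) = i + 1 then i else a := by
  rw [sperm_of_lt h, swap_apply_def]
  split_ifs <;> simp_all [Fin.ext_iff]

theorem sperm_lt_sperm_iff {i : ℕ} (h : i + 1 < n) {a b : Fin n}
    (hab : ¬((a : ℕ) = i ∧ (b : ℕ) = i + 1)) (hba : ¬((a : ℕ) = i + 1 ∧ (b : ℕ) = i)) :
    sperm n i a < sperm n i b ↔ a < b := by
  rw [Fin.lt_def, Fin.lt_def, sperm_apply_val h, sperm_apply_val h]
  split_ifs <;> omega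

theorem apply_lt_or_apply_gt {i : ℕ} (h : i + 1 < n) (w : Perm (Fin n)) :
    w ⟨i, Nat.lt_of_succ_lt h⟩ < w ⟨i + 1, h⟩ ∨ w ⟨i + 1, h⟩ < w ⟨i, Nat.lt_of_succ_lt h⟩ :=
  lt_or_gt_of_ne (w.injective.ne (by simp [Fin.ext_iff]))

def invCount (w : Perm (Fin n)) : ℕ :=
  #{p : Fin n × Fin n | p.1 < p.2 ∧ w p.2 < w p.1}

theorem invCount_one : invCount (1 : Perm (Fin n)) = 0 :=
  card_eq_zero.2 (filter_eq_empty_iff.2 fun _ _ h => lt_asymm h.1 h.2)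

theorem invCount_mul_sperm_of_lt {i : ℕ} (h : i + 1 < n) {w : Perm (Fin n)}
    (hw : w ⟨i, Nat.lt_of_succ_lt h⟩ < w ⟨i + 1, h⟩) :
    invCount (w * sperm n i) = invCount w + 1 := by
  set I : Fin n := ⟨i, Nat.lt_of_succ_lt h⟩
  set J : Fin n := ⟨i + 1, h⟩
  have hreindex : invCount (w * sperm n i) =
      #{p : Fin n × Fin n | sperm n i p.1 < sperm n i p.2 ∧ w p.2 < w p.1} :=
    card_equiv ((sperm n i).prodCongr (sperm n i)) fun p => by
      rw [mem_filter, mem_filter]; simp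
  have hinsert :
      univ.filter (fun p : Fin n × Fin n => sperm n i p.1 < sperm n i p.2 ∧ w p.2 < w p.1) =
        insert (J, I) (univ.filter fun p : Fin n × Fin n => p.1 < p.2 ∧ w p.2 < w p.1) := by
    ext ⟨a, b⟩
    simp only [mem_insert, mem_filter, mem_univ, true_and, Prod.mk.injEq]
    by_cases hJI : a = J ∧ b = I
    · obtain ⟨rfl, rfl⟩ := hJI
      simpa [I, J, sperm_of_lt h] using hw
    by_cases hIJ : a = I ∧ b = J
    · obtain ⟨rfl, rfl⟩ := hIJ
      simp [I, J, sperm_of_lt h, hw.le, Fin.ext_iff]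
    simp only [I, J, Fin.ext_iff] at hJI hIJ
    simp [I, J, hJI, sperm_lt_sperm_iff h hIJ hJI, Fin.ext_iff]
  rw [hreindex, hinsert, card_insert_of_notMem (by simp [I, J, Fin.mk_lt_mk])]
  rfl

theorem invCount_mul_sperm_of_gt {i : ℕ} (h : i + 1 < n) {w : Perm (Fin n)}
    (hw : w ⟨i + 1, h⟩ < w ⟨i, Nat.lt_of_succ_lt h⟩) :
    invCount (w * sperm n i) + 1 = invCount w := by
  simpa [mul_assoc] using (invCount_mul_sperm_of_lt h (w := w * sperm n i)
    (by rwa [mul_sperm_apply_fst, mul_sperm_apply_snd])).symm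

theorem eq_one_of_forall_val_apply_le {w : Perm (Fin n)} (hw : ∀ a, (w a : ℕ) ≤ a) : w = 1 := by
  have hsum : ∑ a, (w a : ℕ) = ∑ a : Fin n, (a : ℕ) := Equiv.sum_comp w _
  rw [sum_eq_sum_iff_of_le fun a _ => hw a] at hsum
  exact Perm.ext fun a => Fin.ext (hsum a (mem_univ a))

theorem eq_one_of_forall_apply_lt_apply_succ {w : Perm (Fin n)}
    (hw : ∀ (i : ℕ) (h : i + 1 < n), w ⟨i, Nat.lt_of_succ_lt h⟩ < w ⟨i + 1, h⟩) : w = 1 := by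
  have hmono : ∀ (k : ℕ) (hk : k < n), k ≤ (w ⟨k, hk⟩ : ℕ) := by
    intro k
    induction k with
    | zero => exact fun _ => Nat.zero_le _
    | succ k ih => exact fun hk => (ih (by omega)).trans_lt (hw k hk)
  rw [← inv_inv w, eq_one_of_forall_val_apply_le (w := w⁻¹) fun a => ?_, inv_one]
  simpa using hmono _ (w⁻¹ a).isLt

theorem wordPerm_append_singleton (l : List ℕ) (i : ℕ) :
    wordPerm n (l ++ [i]) = wordPerm n l * sperm n i := by
  simp [wordPerm]

theorem invCount_wordPerm_le_length (l : List ℕ) : invCount (wordPerm n l) ≤ l.length := by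
  induction l using List.reverseRecOn with
  | nil => simp [wordPerm, invCount_one]
  | append_singleton l i ih =>
    rw [wordPerm_append_singleton, List.length_append, List.length_singleton]
    by_cases h : i + 1 < n
    · rcases apply_lt_or_apply_gt h (wordPerm n l) with hw | hw
      · rw [invCount_mul_sperm_of_lt h hw]; omega
      · have := invCount_mul_sperm_of_gt h hw; omega
    · rw [sperm_of_not_lt h, mul_one]; omega

theorem exists_isWordFor_length_eq_invCount (w : Perm (Fin n)) :
    ∃ l, IsWordFor n l w ∧ l.length = invCount w := by
  induction hk : invCount w using Nat.strong_induction_on generalizing w with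
  | _ k ih =>
    by_cases hasc : ∀ (i : ℕ) (h : i + 1 < n), w ⟨i, Nat.lt_of_succ_lt h⟩ < w ⟨i + 1, h⟩
    · obtain rfl := eq_one_of_forall_apply_lt_apply_succ hasc
      exact ⟨[], ⟨by simp, rfl⟩, by rw [← hk, invCount_one]; rfl⟩
    push Not at hasc
    obtain ⟨i, h, hdesc⟩ := hasc
    have hdesc := hdesc.lt_of_ne (w.injective.ne (by simp [Fin.ext_iff]))
    have hstep := invCount_mul_sperm_of_gt h hdesc
    obtain ⟨l, ⟨hvalid, hprod⟩, hlen⟩ := ih _ (by omega) (w * sperm n i) rfl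
    refine ⟨l ++ [i], ⟨?_, ?_⟩, by rw [List.length_append, List.length_singleton]; omega⟩
    · simpa [or_imp, forall_and] using ⟨hvalid, h⟩
    · rw [wordPerm_append_singleton, hprod, mul_assoc, sperm_mul_self, mul_one]

theorem plen_eq_invCount (w : Perm (Fin n)) : plen n w = invCount w := by
  obtain ⟨l, hl, hlen⟩ := exists_isWordFor_length_eq_invCount w
  refine le_antisymm (Nat.sInf_le ⟨l, hl, hlen⟩) (le_csInf ⟨_, l, hl, hlen⟩ ?_)
  rintro _ ⟨l', ⟨-, rfl⟩, rfl⟩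
  exact invCount_wordPerm_le_length l'

theorem plen_one : plen n 1 = 0 := by rw [plen_eq_invCount, invCount_one]

theorem plen_mul_sperm_of_lt {i : ℕ} (h : i + 1 < n) {w : Perm (Fin n)}
    (hw : w ⟨i, Nat.lt_of_succ_lt h⟩ < w ⟨i + 1, h⟩) :
    plen n (w * sperm n i) = plen n w + 1 := by
  simp only [plen_eq_invCount, invCount_mul_sperm_of_lt h hw]

theorem plen_mul_sperm_of_gt {i : ℕ} (h : i + 1 < n) {w : Perm (Fin n)}
    (hw : w ⟨i + 1, h⟩ < w ⟨i, Nat.lt_of_succ_lt h⟩) :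
    plen n (w * sperm n i) + 1 = plen n w := by
  simp only [plen_eq_invCount, invCount_mul_sperm_of_gt h hw]

theorem plen_wordPerm_le_length (l : List ℕ) : plen n (wordPerm n l) ≤ l.length :=
  plen_eq_invCount (wordPerm n l) ▸ invCount_wordPerm_le_length l

def rankCount (w : Perm (Fin n)) (k j : ℕ) : ℕ := #{a : Fin n | (a : ℕ) < k ∧ j ≤ (w a : ℕ)}

def RankLE (u w : Perm (Fin n)) : Prop := ∀ k j, rankCount u k j ≤ rankCount w k j

theorem RankLE.refl (u : Perm (Fin n)) : RankLE u u := fun _ _ => le_rfl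

theorem RankLE.trans {u v w : Perm (Fin n)} (huv : RankLE u v) (hvw : RankLE v w) :
    RankLE u w := fun k j => (huv k j).trans (hvw k j)

theorem rankCount_succ (w : Perm (Fin n)) {k : ℕ} (hk : k < n) (j : ℕ) :
    rankCount w (k + 1) j = rankCount w k j + if j ≤ (w ⟨k, hk⟩ : ℕ) then 1 else 0 := by
  have hsplit : ∀ a : Fin n, (if (a : ℕ) < k + 1 ∧ j ≤ (w a : ℕ) then 1 else 0) =
      (if (a : ℕ) < k ∧ j ≤ (w a : ℕ) then 1 else 0) +
        if a = ⟨k, hk⟩ then (if j ≤ (w a : ℕ) then 1 else 0) else 0 := by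
    intro a
    rcases eq_or_ne a ⟨k, hk⟩ with rfl | ha
    · simp
    · have hlt : (a : ℕ) < k + 1 ↔ (a : ℕ) < k := by
        have : (a : ℕ) ≠ k := fun hak => ha (Fin.ext hak)
        omega
      simp only [hlt, if_neg ha, add_zero]
  simp only [rankCount, card_filter, hsplit, sum_add_distrib, sum_ite_eq', mem_univ, if_true]

theorem rankCount_mul_sperm {i : ℕ} (h : i + 1 < n) (w : Perm (Fin n)) {k : ℕ} (hk : k ≠ i + 1)
    (j : ℕ) : rankCount (w * sperm n i) k j = rankCount w k j := by
  refine card_equiv (sperm n i) fun a => ?_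
  rw [mem_filter, mem_filter, Perm.mul_apply, sperm_apply_val h]
  split_ifs <;> simp only [mem_univ, true_and] <;> omega

theorem rankCount_mul_sperm_succ {i : ℕ} (h : i + 1 < n) (w : Perm (Fin n)) (j : ℕ) :
    rankCount (w * sperm n i) (i + 1) j =
      rankCount w i j + if j ≤ (w ⟨i + 1, h⟩ : ℕ) then 1 else 0 := by
  rw [rankCount_succ _ (Nat.lt_of_succ_lt h), rankCount_mul_sperm h w (by omega),
    mul_sperm_apply_fst]

theorem rankLE_mul_sperm_of_gt {i : ℕ} (h : i + 1 < n) {w : Perm (Fin n)}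
    (hw : w ⟨i + 1, h⟩ < w ⟨i, Nat.lt_of_succ_lt h⟩) : RankLE (w * sperm n i) w := by
  intro k j
  by_cases hk : k = i + 1
  · subst hk
    rw [rankCount_mul_sperm_succ h, rankCount_succ w (Nat.lt_of_succ_lt h)]
    have := Fin.lt_def.1 hw
    split_ifs <;> omega
  · rw [rankCount_mul_sperm h w hk]

theorem rankLE_mul_sperm_of_lt {i : ℕ} (h : i + 1 < n) {w : Perm (Fin n)}
    (hw : w ⟨i, Nat.lt_of_succ_lt h⟩ < w ⟨i + 1, h⟩) : RankLE w (w * sperm n i) := by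
  simpa [mul_assoc] using rankLE_mul_sperm_of_gt h (w := w * sperm n i)
    (by rwa [mul_sperm_apply_fst, mul_sperm_apply_snd])

theorem rankLE_mul_sperm_of_lt_of_lt {i : ℕ} (h : i + 1 < n) {u w : Perm (Fin n)}
    (hd : RankLE u w) (hu : u ⟨i, Nat.lt_of_succ_lt h⟩ < u ⟨i + 1, h⟩)
    (hw : w ⟨i, Nat.lt_of_succ_lt h⟩ < w ⟨i + 1, h⟩) :
    RankLE (u * sperm n i) (w * sperm n i) := by
  intro k j
  by_cases hk : k = i + 1
  · subst hk
    have h₀ := hd i j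
    have h₂ := hd (i + 2) j
    rw [rankCount_succ u h, rankCount_succ w h, rankCount_succ u (Nat.lt_of_succ_lt h),
      rankCount_succ w (Nat.lt_of_succ_lt h)] at h₂
    rw [rankCount_mul_sperm_succ h, rankCount_mul_sperm_succ h]
    have := Fin.lt_def.1 hu
    have := Fin.lt_def.1 hw
    split_ifs at h₂ ⊢ <;> omega
  · rw [rankCount_mul_sperm h u hk, rankCount_mul_sperm h w hk]
    exact hd k j

theorem rankLE_of_rankLE_mul_sperm {i : ℕ} (h : i + 1 < n) {u w : Perm (Fin n)}
    (hd : RankLE u (w * sperm n i)) (hu : u ⟨i, Nat.lt_of_succ_lt h⟩ < u ⟨i + 1, h⟩)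
    (hw : w ⟨i, Nat.lt_of_succ_lt h⟩ < w ⟨i + 1, h⟩) : RankLE u w := by
  intro k j
  by_cases hk : k = i + 1
  · subst hk
    have h₀ := hd i j
    have h₂ := hd (i + 2) j
    rw [rankCount_mul_sperm h w (by omega)] at h₀
    rw [rankCount_mul_sperm h w (by omega), rankCount_succ u h, rankCount_succ w h,
      rankCount_succ u (Nat.lt_of_succ_lt h), rankCount_succ w (Nat.lt_of_succ_lt h)] at h₂
    rw [rankCount_succ u (Nat.lt_of_succ_lt h), rankCount_succ w (Nat.lt_of_succ_lt h)]
    have := Fin.lt_def.1 hu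
    have := Fin.lt_def.1 hw
    split_ifs at h₂ ⊢ <;> omega
  · simpa only [rankCount_mul_sperm h w hk] using hd k j

theorem eq_one_of_rankLE_one {u : Perm (Fin n)} (hu : RankLE u 1) : u = 1 := by
  refine eq_one_of_forall_val_apply_le fun a => not_lt.1 fun ha => ?_
  have hpos : 0 < rankCount u (a + 1) (a + 1) :=
    card_pos.2 ⟨a, by rw [mem_filter]; exact ⟨mem_univ a, by omega, ha⟩⟩
  have hzero : rankCount (1 : Perm (Fin n)) (a + 1) (a + 1) = 0 :=
    card_eq_zero.2 (filter_eq_empty_iff.2 fun b _ hb => by rw [Perm.one_apply] at hb; omega)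
  have := hu (a + 1) (a + 1)
  omega

theorem IsReducedWord.of_append_singleton {l : List ℕ} {i : ℕ} {w : Perm (Fin n)}
    (hred : IsReducedWord n (l ++ [i]) w) :
    ∃ h : i + 1 < n, IsReducedWord n l (wordPerm n l) ∧ w = wordPerm n l * sperm n i ∧
      wordPerm n l ⟨i, Nat.lt_of_succ_lt h⟩ < wordPerm n l ⟨i + 1, h⟩ := by
  obtain ⟨⟨hvalid, rfl⟩, hlen⟩ := hred
  have h : i + 1 < n := hvalid i (by simp)
  have hle := plen_wordPerm_le_length (n := n) l
  rw [wordPerm_append_singleton, List.length_append, List.length_singleton] at *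
  have hasc : wordPerm n l ⟨i, Nat.lt_of_succ_lt h⟩ < wordPerm n l ⟨i + 1, h⟩ := by
    refine (apply_lt_or_apply_gt h _).resolve_right fun hdesc => ?_
    have := plen_mul_sperm_of_gt h hdesc
    omega
  have := plen_mul_sperm_of_lt h hasc
  exact ⟨h, ⟨⟨fun j hj => hvalid j (by simp [hj]), rfl⟩, by omega⟩, rfl, hasc⟩

theorem rankLE_wordPerm_of_sublist {lw : List ℕ} {w : Perm (Fin n)}
    (hred : IsReducedWord n lw w) {l : List ℕ} (hl : l.Sublist lw) : RankLE (wordPerm n l) w := by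
  induction lw using List.reverseRecOn generalizing w l with
  | nil =>
    rw [List.sublist_nil.1 hl, ← hred.1.2]
    exact RankLE.refl _
  | append_singleton lw i ih =>
    obtain ⟨h, hred₀, rfl, hasc⟩ := hred.of_append_singleton
    have hw₀ := rankLE_mul_sperm_of_lt h hasc
    obtain ⟨l₁, l₂, rfl, hl₁, hl₂⟩ := List.sublist_append_iff.1 hl
    have hd₁ := ih hred₀ hl₁
    rcases List.sublist_singleton.1 hl₂ with rfl | rfl
    · rw [List.append_nil]
      exact hd₁.trans hw₀
    · rw [wordPerm_append_singleton]
      rcases apply_lt_or_apply_gt h (wordPerm n l₁) with hu | hu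
      · exact rankLE_mul_sperm_of_lt_of_lt h hd₁ hu hasc
      · exact (rankLE_mul_sperm_of_gt h hu).trans (hd₁.trans hw₀)

theorem rankLE_of_bruhatLE {u w : Perm (Fin n)} (h : BruhatLE n u w) : RankLE u w := by
  obtain ⟨lw, hred, l, hl, rfl⟩ := h
  exact rankLE_wordPerm_of_sublist hred hl

theorem demProd_append_singleton (l : List ℕ) (i : ℕ) :
    DemProd n (l ++ [i]) =
      if plen n (DemProd n l) < plen n (DemProd n l * sperm n i)
      then DemProd n l * sperm n i else DemProd n l := by
  rw [DemProd, DemProd, List.foldl_append]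
  rfl

def descendStep (n : ℕ) (w : Perm (Fin n)) (i : ℕ) : Perm (Fin n) :=
  if plen n (w * sperm n i) < plen n w then w * sperm n i else w

theorem descendStep_of_lt {i : ℕ} (h : i + 1 < n) {w : Perm (Fin n)}
    (hw : w ⟨i, Nat.lt_of_succ_lt h⟩ < w ⟨i + 1, h⟩) : descendStep n w i = w := by
  rw [descendStep, if_neg (by rw [plen_mul_sperm_of_lt h hw]; omega)]

theorem descendStep_of_gt {i : ℕ} (h : i + 1 < n) {w : Perm (Fin n)}
    (hw : w ⟨i + 1, h⟩ < w ⟨i, Nat.lt_of_succ_lt h⟩) : descendStep n w i = w * sperm n i := by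
  rw [descendStep, if_pos (by have := plen_mul_sperm_of_gt h hw; omega)]

theorem descendStep_of_not_lt {i : ℕ} (h : ¬i + 1 < n) (w : Perm (Fin n)) :
    descendStep n w i = w := by
  simp [descendStep, sperm_of_not_lt h]

theorem descendStep_ne {i : ℕ} {w : Perm (Fin n)} (hne : descendStep n w i ≠ w) :
    i + 1 < n ∧ w = descendStep n w i * sperm n i ∧
      plen n (descendStep n w i * sperm n i) = plen n (descendStep n w i) + 1 := by
  by_cases h : i + 1 < n
  · rcases apply_lt_or_apply_gt h w with hw | hw
    · exact absurd (descendStep_of_lt h hw) hne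
    · rw [descendStep_of_gt h hw, mul_assoc, sperm_mul_self, mul_one]
      exact ⟨h, rfl, (plen_mul_sperm_of_gt h hw).symm⟩
  · exact absurd (descendStep_of_not_lt h w) hne

theorem rankLE_descendStep {u : Perm (Fin n)} {l : List ℕ} {i : ℕ}
    (hd : RankLE u (DemProd n (l ++ [i]))) : RankLE (descendStep n u i) (DemProd n l) := by
  rw [demProd_append_singleton] at hd
  by_cases h : i + 1 < n
  swap
  · simpa [descendStep_of_not_lt h, sperm_of_not_lt h] using hd
  set w := DemProd n l
  rcases apply_lt_or_apply_gt h w with hw | hw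
  · rw [if_pos (by rw [plen_mul_sperm_of_lt h hw]; omega)] at hd
    rcases apply_lt_or_apply_gt h u with hu | hu
    · rw [descendStep_of_lt h hu]
      exact rankLE_of_rankLE_mul_sperm h hd hu hw
    · rw [descendStep_of_gt h hu]
      exact rankLE_of_rankLE_mul_sperm h ((rankLE_mul_sperm_of_gt h hu).trans hd)
        (by rwa [mul_sperm_apply_fst, mul_sperm_apply_snd]) hw
  · rw [if_neg (by have := plen_mul_sperm_of_gt h hw; omega)] at hd
    rcases apply_lt_or_apply_gt h u with hu | hu
    · rwa [descendStep_of_lt h hu]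
    · rw [descendStep_of_gt h hu]
      exact (rankLE_mul_sperm_of_gt h hu).trans hd

theorem IsReducedWord.append_singleton {l : List ℕ} {i : ℕ} {w : Perm (Fin n)}
    (hl : IsReducedWord n l w) (h : i + 1 < n) (hw : plen n (w * sperm n i) = plen n w + 1) :
    IsReducedWord n (l ++ [i]) (w * sperm n i) := by
  obtain ⟨⟨hvalid, rfl⟩, hlen⟩ := hl
  refine ⟨⟨?_, wordPerm_append_singleton l i⟩, by simp [hw, hlen]⟩
  simpa [or_imp, forall_and] using ⟨hvalid, h⟩

theorem length_filter_ne_add_card_filter_eq {α : Type*} [DecidableEq α] (f : ℕ → α) (m : ℕ) :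
    ((List.range m).filter fun c => decide (f (c + 1) ≠ f c)).length +
      #{c ∈ Icc 1 m | f c = f (c - 1)} = m := by
  induction m with
  | zero => simp
  | succ m ih =>
    rw [List.range_succ, List.filter_append, List.length_append,
      ← insert_Icc_right_eq_Icc_add_one (by omega), filter_insert, Nat.add_sub_cancel]
    by_cases hf : f (m + 1) = f m
    · rw [if_pos hf, card_insert_of_notMem (by simp), List.filter_singleton,
        decide_eq_false (not_not.2 hf), cond_false, List.length_nil]
      omega
    · rw [if_neg hf, List.filter_singleton, decide_eq_true hf, cond_true, List.length_singleton]
      omega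

section DistinguishedSubexpression

variable {l : List ℕ} {useq : ℕ → Perm (Fin n)}

theorem rankLE_useq_demProd_take
    (hstep : ∀ c < l.length, useq c = descendStep n (useq (c + 1)) (l.getD c 0))
    (htop : RankLE (useq l.length) (DemProd n l)) {c : ℕ} (hc : c ≤ l.length) :
    RankLE (useq c) (DemProd n (l.take c)) := by
  induction hc using Nat.decreasingInduction with
  | self => simpa using htop
  | of_succ c hc ih =>
    rw [hstep c hc]
    rw [← List.take_concat_get' l c hc, ← List.getD_eq_getElem l 0 hc] at ih
    exact rankLE_descendStep ih

theorem useq_zero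
    (hstep : ∀ c < l.length, useq c = descendStep n (useq (c + 1)) (l.getD c 0))
    (htop : RankLE (useq l.length) (DemProd n l)) : useq 0 = 1 :=
  eq_one_of_rankLE_one <| by
    simpa [DemProd] using rankLE_useq_demProd_take hstep htop (Nat.zero_le _)

theorem isReducedWord_useq
    (hstep : ∀ c < l.length, useq c = descendStep n (useq (c + 1)) (l.getD c 0))
    (h0 : useq 0 = 1) {c : ℕ} (hc : c ≤ l.length) :
    IsReducedWord n (((List.range c).filter fun c0 => decide (useq (c0 + 1) ≠ useq c0)).map
      fun c0 => l.getD c0 0) (useq c) := by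
  induction c with
  | zero => exact ⟨⟨by simp, by simp [h0, wordPerm]⟩, by simp [h0, plen_one]⟩
  | succ c ih =>
    rw [List.range_succ, List.filter_append, List.map_append]
    by_cases hc' : useq (c + 1) = useq c
    · simpa [hc'] using ih (by omega)
    · have hne : descendStep n (useq (c + 1)) (l.getD c 0) ≠ useq (c + 1) :=
        hstep c (by omega) ▸ Ne.symm hc'
      obtain ⟨h, hmul, hlen⟩ := descendStep_ne hne
      rw [← hstep c (by omega)] at hmul hlen
      have hred := (ih (by omega)).append_singleton h hlen
      rw [← hmul] at hred
      simpa [hc'] using hred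

end DistinguishedSubexpression

/-- The word is `β = (i_1,…,i_m)` with `i_c = l.getD (c-1) 0` (1-indexed `c`); `useq c` is
`u_{(c)}`. The condition `u_{(c)} s_{i_c} < u_{(c)}` is length decrease. -/
theorem stmt17_general (n m : ℕ) (l : List ℕ) (hlenl : l.length = m)
    (u : Equiv.Perm (Fin n)) (hle : BruhatLE n u (DemProd n l))
    (useq : ℕ → Equiv.Perm (Fin n)) (htop : useq m = u)
    (hrec : ∀ c : ℕ, 1 ≤ c → c ≤ m →
      useq (c - 1) =
        if plen n (useq c * sperm n (l.getD (c - 1) 0)) < plen n (useq c)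
        then useq c * sperm n (l.getD (c - 1) 0) else useq c) :
    useq 0 = 1 ∧
    ((Finset.Icc 1 m).filter fun c => useq c = useq (c - 1)).card = m - plen n u ∧
    IsReducedWord n
      (((List.range m).filter fun c0 => decide (useq (c0 + 1) ≠ useq c0)).map
        fun c0 => l.getD c0 0) u := by
  subst hlenl htop
  have hstep : ∀ c < l.length, useq c = descendStep n (useq (c + 1)) (l.getD c 0) :=
    fun c hc => by simpa [descendStep] using hrec (c + 1) (by omega) hc
  have h0 := useq_zero hstep (rankLE_of_bruhatLE hle)
  have hred := isReducedWord_useq hstep h0 le_rfl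
  refine ⟨h0, ?_, hred⟩
  have := length_filter_ne_add_card_filter_eq useq l.length
  rw [← hred.2, List.length_map]
  omega

/-- the positive distinguished subexpression. The word is
`β = (i_1,…,i_m)` with `i_c = l.getD (c-1) 0` (1-indexed `c`); `useq c` is
`u_{(c)}`. The condition `u_{(c)} s_{i_c} < u_{(c)}` is length decrease. -/
theorem stmt17 (n m : ℕ) (l : List ℕ) (hlenl : l.length = m)
    (hvalid : ∀ i ∈ l, i + 1 < n)
    (u : Equiv.Perm (Fin n)) (hle : BruhatLE n u (DemProd n l))
    (useq : ℕ → Equiv.Perm (Fin n)) (htop : useq m = u)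
    (hrec : ∀ c : ℕ, 1 ≤ c → c ≤ m →
      useq (c - 1) =
        if plen n (useq c * sperm n (l.getD (c - 1) 0)) < plen n (useq c)
        then useq c * sperm n (l.getD (c - 1) 0) else useq c) :
    useq 0 = 1 ∧
    ((Finset.Icc 1 m).filter fun c => useq c = useq (c - 1)).card = m - plen n u ∧
    IsReducedWord n
      (((List.range m).filter fun c0 => decide (useq (c0 + 1) ≠ useq c0)).map
        fun c0 => l.getD c0 0) u :=
  stmt17_general n m l hlenl u hle useq htop hrec
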